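/- arXiv:2303.18185 — 4 statements merged into one kernel-verified Lean document; each statement's English description precedes it below -/
import Mathlib

section
/- Let a > 0, b > 0, A > 0, B > 0, G > 0 and 1 < γ < 2 < 2θ < p. Define Φ(t) = a·t^(2−γ)A + b·t^(2θ−γ)B − t^(p−γ)G for t > 0. Then Φ attains a global maximum at a unique point t₊ > 0, and for every c with 0 < c < Φ(t₊) the equation Φ(t) = c has exactly two positive solutions t₁ < t₊ < t₂; for c = Φ(t₊) it has exactly one solution; and for c > Φ(t₊) it has no solution. -/
open Real Filter Set

/-- For `C > 0`, `e > 0`, we can find arbitrarily large `t ≥ 1` with `C * t ^ e > M`. -/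
lemma exists_big_aux (C e M L : ℝ) (hC : 0 < C) (he : 0 < e) :
    ∃ t : ℝ, L < t ∧ 1 ≤ t ∧ M < C * t ^ e := by
  set v : ℝ := ((max M 0 + 1) / C) ^ e⁻¹ with hv
  have hbase : 0 < (max M 0 + 1) / C := by positivity
  have hvpos : 0 ≤ v := Real.rpow_nonneg hbase.le _
  refine ⟨max (max 1 (L + 1)) v, ?_, ?_, ?_⟩
  · calc L < L + 1 := by linarith
    _ ≤ max 1 (L+1) := le_max_right _ _
    _ ≤ _ := le_max_left _ _
  · exact le_trans (le_trans (le_max_left 1 (L+1)) (le_max_left _ _)) le_rfl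
  · have h1 : v ≤ max (max 1 (L + 1)) v := le_max_right _ _
    have h2 : v ^ e ≤ (max (max 1 (L + 1)) v) ^ e :=
      Real.rpow_le_rpow hvpos h1 he.le
    have h3 : v ^ e = (max M 0 + 1) / C := by
      rw [hv, ← Real.rpow_mul hbase.le, inv_mul_cancel₀ he.ne', Real.rpow_one]
    have h4 : M < max M 0 + 1 := by
      have := le_max_left M 0; linarith
    have h5 : C * v ^ e = max M 0 + 1 := by
      rw [h3]; field_simp
    nlinarith [Real.rpow_nonneg (le_trans hvpos h1) e]

theorem stmt_2_aux (a b A B G γ θ p : ℝ) (ha : 0 < a) (hb : 0 < b) (hA : 0 < A)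
    (hB : 0 < B) (hG : 0 < G) (hγ1 : 1 < γ) (hγ2 : γ < 2) (h2θ : 2 < 2 * θ)
    (hθp : 2 * θ < p)
    (Φ : ℝ → ℝ)
    (hΦ : Φ = fun t => a * t ^ (2 - γ) * A + b * t ^ (2 * θ - γ) * B - t ^ (p - γ) * G) :
    ∃ tp : ℝ, 0 < tp ∧ (∀ t : ℝ, 0 < t → t ≠ tp → Φ t < Φ tp) ∧
      (∀ c : ℝ, 0 < c → c < Φ tp →
        ∃ t₁ t₂ : ℝ, 0 < t₁ ∧ t₁ < tp ∧ tp < t₂ ∧ Φ t₁ = c ∧ Φ t₂ = c ∧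
          ∀ t : ℝ, 0 < t → Φ t = c → t = t₁ ∨ t = t₂) ∧
      (∃! t : ℝ, 0 < t ∧ Φ t = Φ tp) ∧
      (∀ c : ℝ, Φ tp < c → ¬ ∃ t : ℝ, 0 < t ∧ Φ t = c) := by
  obtain ⟨c1, hc1⟩ : ∃ c1 : ℝ, c1 = a * A * (2 - γ) := ⟨_, rfl⟩
  obtain ⟨c2, hc2⟩ : ∃ c2 : ℝ, c2 = b * B * (2 * θ - γ) := ⟨_, rfl⟩
  obtain ⟨c3, hc3⟩ : ∃ c3 : ℝ, c3 = G * (p - γ) := ⟨_, rfl⟩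
  obtain ⟨α, hα⟩ : ∃ α : ℝ, α = 2 * θ - 2 := ⟨_, rfl⟩
  obtain ⟨β, hβ⟩ : ∃ β : ℝ, β = p - 2 := ⟨_, rfl⟩
  have hc1p : 0 < c1 := by rw [hc1]; exact mul_pos (mul_pos ha hA) (by linarith)
  have hc2p : 0 < c2 := by rw [hc2]; exact mul_pos (mul_pos hb hB) (by linarith)
  have hc3p : 0 < c3 := by rw [hc3]; exact mul_pos hG (by linarith)
  have hαp : 0 < α := by rw [hα]; linarith
  have hβα : 0 < β - α := by rw [hβ, hα]; linarith
  obtain ⟨χ, hχ⟩ : ∃ χ : ℝ → ℝ, χ = fun x => c1 * x ^ (-α) + c2 - c3 * x ^ (β - α) :=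
    ⟨_, rfl⟩
  -- χ is strictly decreasing on (0, ∞)
  have hχanti : StrictAntiOn χ (Ioi (0:ℝ)) := by
    intro x hx y hy hxy
    simp only [mem_Ioi] at hx hy
    have h1 : x ^ α < y ^ α := Real.rpow_lt_rpow hx.le hxy hαp
    have hxα : 0 < x ^ α := Real.rpow_pos_of_pos hx _
    have hyα : 0 < y ^ α := Real.rpow_pos_of_pos hy _
    have h2 : y ^ (-α) < x ^ (-α) := by
      rw [Real.rpow_neg hx.le, Real.rpow_neg hy.le]
      exact inv_strictAnti₀ hxα h1
    have h3 : x ^ (β - α) < y ^ (β - α) := Real.rpow_lt_rpow hx.le hxy hβα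
    simp only [hχ]
    nlinarith
  -- a point where χ > 0
  obtain ⟨s, hs⟩ : ∃ s : ℝ, s = (c2 / (2 * c3)) ^ (β - α)⁻¹ := ⟨_, rfl⟩
  have hsb : 0 < c2 / (2 * c3) := by positivity
  have hspos : 0 < s := hs ▸ Real.rpow_pos_of_pos hsb _
  have hχs : 0 < χ s := by
    have h3 : s ^ (β - α) = c2 / (2 * c3) := by
      rw [hs, ← Real.rpow_mul hsb.le, inv_mul_cancel₀ hβα.ne', Real.rpow_one]
    have h4 : c3 * s ^ (β - α) = c2 / 2 := by rw [h3]; field_simp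
    have h5 : 0 < c1 * s ^ (-α) := mul_pos hc1p (Real.rpow_pos_of_pos hspos _)
    simp only [hχ]
    rw [h4]
    linarith
  -- a point where χ < 0
  obtain ⟨u, hsu, hu1, hubig⟩ := exists_big_aux c3 (β - α) (c1 + c2) s hc3p hβα
  have hupos : 0 < u := lt_of_lt_of_le one_pos hu1
  have hχu : χ u < 0 := by
    have h1 : u ^ (-α) ≤ 1 :=
      Real.rpow_le_one_of_one_le_of_nonpos hu1 (by linarith)
    have h2 : c1 * u ^ (-α) ≤ c1 := by nlinarith
    simp only [hχ]; linarith
  -- the critical point t₀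
  have hχcont : ContinuousOn χ (Icc s u) := by
    intro x hx
    have hxpos : 0 < x := lt_of_lt_of_le hspos hx.1
    have h1 : ContinuousAt (fun t : ℝ => t ^ (-α)) x :=
      Real.continuousAt_rpow_const x _ (Or.inl hxpos.ne')
    have h2 : ContinuousAt (fun t : ℝ => t ^ (β - α)) x :=
      Real.continuousAt_rpow_const x _ (Or.inl hxpos.ne')
    have h4 : ContinuousAt (fun x : ℝ => c1 * x ^ (-α) + c2 - c3 * x ^ (β - α)) x :=
      ((h1.const_mul c1).add (continuousAt_const : ContinuousAt (fun _ : ℝ => c2) x)).sub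
        (h2.const_mul c3)
    rw [hχ]
    exact h4.continuousWithinAt
  obtain ⟨t₀, ht₀mem, ht₀⟩ : ∃ t₀ ∈ Icc s u, χ t₀ = 0 := by
    have := intermediate_value_Icc' hsu.le hχcont
    have h0 : (0:ℝ) ∈ Icc (χ u) (χ s) := ⟨hχu.le, hχs.le⟩
    obtain ⟨t₀, ht₀mem, ht₀⟩ := this h0
    exact ⟨t₀, ht₀mem, ht₀⟩
  have ht₀pos : 0 < t₀ := lt_of_lt_of_le hspos ht₀mem.1
  -- sign of χ
  have hχpos : ∀ x : ℝ, 0 < x → x < t₀ → 0 < χ x := fun x hx hxt => by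
    have := hχanti (mem_Ioi.mpr hx) (mem_Ioi.mpr ht₀pos) hxt
    rw [ht₀] at this; exact this
  have hχneg : ∀ x : ℝ, t₀ < x → χ x < 0 := fun x hxt => by
    have := hχanti (mem_Ioi.mpr ht₀pos) (mem_Ioi.mpr (ht₀pos.trans hxt)) hxt
    rw [ht₀] at this; exact this
  -- derivative of Φ
  have hderiv : ∀ x : ℝ, 0 < x →
      HasDerivAt Φ (x ^ (1 - γ) * (x ^ α * χ x)) x := by
    intro x hx
    have h1 : HasDerivAt (fun t : ℝ => t ^ (2 - γ)) ((2 - γ) * x ^ (2 - γ - 1)) x :=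
      Real.hasDerivAt_rpow_const (Or.inl hx.ne')
    have h2 : HasDerivAt (fun t : ℝ => t ^ (2 * θ - γ)) ((2 * θ - γ) * x ^ (2 * θ - γ - 1)) x :=
      Real.hasDerivAt_rpow_const (Or.inl hx.ne')
    have h3 : HasDerivAt (fun t : ℝ => t ^ (p - γ)) ((p - γ) * x ^ (p - γ - 1)) x :=
      Real.hasDerivAt_rpow_const (Or.inl hx.ne')
    have h : HasDerivAt Φ
        (a * ((2 - γ) * x ^ (2 - γ - 1)) * A + b * ((2 * θ - γ) * x ^ (2 * θ - γ - 1)) * B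
          - (p - γ) * x ^ (p - γ - 1) * G) x := by
      rw [hΦ]
      exact (((h1.const_mul a).mul_const A).add ((h2.const_mul b).mul_const B)).sub
        (h3.mul_const G)
    have heq : a * ((2 - γ) * x ^ (2 - γ - 1)) * A + b * ((2 * θ - γ) * x ^ (2 * θ - γ - 1)) * B
          - (p - γ) * x ^ (p - γ - 1) * G = x ^ (1 - γ) * (x ^ α * χ x) := by
      have e1 : x ^ (2 - γ - 1) = x ^ (1 - γ) := by
        have : (2:ℝ) - γ - 1 = 1 - γ := by ring
        rw [this]
      have e2 : x ^ (2 * θ - γ - 1) = x ^ (1 - γ) * x ^ α := by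
        have : 2 * θ - γ - 1 = (1 - γ) + α := by rw [hα]; ring
        rw [this, Real.rpow_add hx]
      have e3 : x ^ (p - γ - 1) = x ^ (1 - γ) * (x ^ α * x ^ (β - α)) := by
        have : p - γ - 1 = (1 - γ) + (α + (β - α)) := by rw [hα, hβ]; ring
        rw [this, Real.rpow_add hx, Real.rpow_add hx]
      have e4 : x ^ α * x ^ (-α) = 1 := by
        rw [← Real.rpow_add hx, add_neg_cancel, Real.rpow_zero]
      simp only [hχ]
      rw [e1, e2, e3, hc1, hc2, hc3]
      linear_combination (-(x ^ (1 - γ) * (a * A * (2 - γ)))) * e4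
    rw [heq] at h; exact h
  -- continuity of Φ on [0, ∞)
  have hΦcont : ∀ x : ℝ, 0 ≤ x → ContinuousAt Φ x := by
    intro x hx
    have hor : x ≠ 0 ∨ (0:ℝ) ≤ 2 - γ := by
      rcases eq_or_lt_of_le hx with h | h
      · exact Or.inr (by linarith)
      · exact Or.inl h.ne'
    have h1 : ContinuousAt (fun t : ℝ => t ^ (2 - γ)) x :=
      Real.continuousAt_rpow_const x _ (hor.imp id fun _ => by linarith)
    have h2 : ContinuousAt (fun t : ℝ => t ^ (2 * θ - γ)) x :=
      Real.continuousAt_rpow_const x _ (hor.imp id fun _ => by linarith)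
    have h3 : ContinuousAt (fun t : ℝ => t ^ (p - γ)) x :=
      Real.continuousAt_rpow_const x _ (hor.imp id fun _ => by linarith)
    have h4 : ContinuousAt
        (fun t : ℝ => a * t ^ (2 - γ) * A + b * t ^ (2 * θ - γ) * B - t ^ (p - γ) * G) x :=
      (((h1.const_mul a).mul (continuousAt_const : ContinuousAt (fun _ : ℝ => A) x)).add
        ((h2.const_mul b).mul (continuousAt_const : ContinuousAt (fun _ : ℝ => B) x))).sub
        (h3.mul (continuousAt_const : ContinuousAt (fun _ : ℝ => G) x))
    rw [hΦ]
    exact h4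
  -- strict monotonicity on [0, t₀]
  have hmono : StrictMonoOn Φ (Icc 0 t₀) := by
    apply strictMonoOn_of_deriv_pos (convex_Icc 0 t₀)
    · exact fun x hx => (hΦcont x hx.1).continuousWithinAt
    · rw [interior_Icc]
      intro x hx
      rw [(hderiv x hx.1).deriv]
      exact mul_pos (Real.rpow_pos_of_pos hx.1 _)
        (mul_pos (Real.rpow_pos_of_pos hx.1 _) (hχpos x hx.1 hx.2))
  -- strict antitonicity on [t₀, ∞)
  have hanti : StrictAntiOn Φ (Ici t₀) := by
    apply strictAntiOn_of_deriv_neg (convex_Ici t₀)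
    · exact fun x hx => (hΦcont x (ht₀pos.le.trans hx)).continuousWithinAt
    · rw [interior_Ici]
      intro x hx
      rw [(hderiv x (ht₀pos.trans hx)).deriv]
      have h1 := hχneg x hx
      have h2 : 0 < x ^ (1 - γ) := Real.rpow_pos_of_pos (ht₀pos.trans hx) _
      have h3 : 0 < x ^ α := Real.rpow_pos_of_pos (ht₀pos.trans hx) _
      have := mul_neg_of_pos_of_neg h2 (mul_neg_of_pos_of_neg h3 h1)
      linarith
  -- global strict maximum
  have hmax : ∀ t : ℝ, 0 < t → t ≠ t₀ → Φ t < Φ t₀ := by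
    intro t ht htne
    rcases lt_or_gt_of_ne htne with h | h
    · exact hmono ⟨ht.le, h.le⟩ ⟨ht₀pos.le, le_rfl⟩ h
    · exact hanti (mem_Ici.mpr le_rfl) (mem_Ici.mpr h.le) h
  have hΦ0 : Φ 0 = 0 := by
    rw [hΦ]
    simp only
    rw [Real.zero_rpow (by linarith : 2 - γ ≠ 0), Real.zero_rpow (by linarith : 2*θ - γ ≠ 0),
      Real.zero_rpow (by linarith : p - γ ≠ 0)]
    ring
  refine ⟨t₀, ht₀pos, hmax, ?_, ?_, ?_⟩
  · -- two solutions
    intro c hc hcΦ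
    -- t₁ in (0, t₀)
    obtain ⟨t₁, ht₁mem, ht₁⟩ : ∃ t₁ ∈ Ioo (0:ℝ) t₀, Φ t₁ = c := by
      have hcont : ContinuousOn Φ (Icc 0 t₀) :=
        fun x hx => (hΦcont x hx.1).continuousWithinAt
      have := intermediate_value_Ioo ht₀pos.le hcont
      have hcm : c ∈ Ioo (Φ 0) (Φ t₀) := by rw [hΦ0]; exact ⟨hc, hcΦ⟩
      obtain ⟨t₁, ht₁mem, ht₁⟩ := this hcm
      exact ⟨t₁, ht₁mem, ht₁⟩
    -- a far point where Φ < 0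
    obtain ⟨T, hTt₀, hT1, hTbig⟩ :=
      exists_big_aux G (p - 2 * θ) (a * A + b * B) t₀ hG (by linarith)
    have hTpos : 0 < T := lt_of_le_of_lt ht₀pos.le hTt₀
    have hΦT : Φ T < 0 := by
      have e1 : T ^ (2 - γ) ≤ T ^ (2 * θ - γ) :=
        Real.rpow_le_rpow_of_exponent_le hT1 (by linarith)
      have e2 : T ^ (p - γ) = T ^ (p - 2 * θ) * T ^ (2 * θ - γ) := by
        rw [← Real.rpow_add hTpos]; ring_nf
      have e3 : 0 < T ^ (2 * θ - γ) := Real.rpow_pos_of_pos hTpos _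
      rw [hΦ]
      simp only
      rw [e2]
      have k1 : a * A * T ^ (2 - γ) ≤ a * A * T ^ (2 * θ - γ) :=
        mul_le_mul_of_nonneg_left e1 (by positivity)
      have k2 : (a * A + b * B) * T ^ (2 * θ - γ) < G * T ^ (p - 2 * θ) * T ^ (2 * θ - γ) :=
        mul_lt_mul_of_pos_right hTbig e3
      nlinarith
    obtain ⟨t₂, ht₂mem, ht₂⟩ : ∃ t₂ ∈ Ioo t₀ T, Φ t₂ = c := by
      have hcont : ContinuousOn Φ (Icc t₀ T) :=
        fun x hx => (hΦcont x (ht₀pos.le.trans hx.1)).continuousWithinAt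
      have := intermediate_value_Ioo' hTt₀.le hcont
      have hcm : c ∈ Ioo (Φ T) (Φ t₀) := ⟨hΦT.trans hc, hcΦ⟩
      obtain ⟨t₂, ht₂mem, ht₂⟩ := this hcm
      exact ⟨t₂, ht₂mem, ht₂⟩
    refine ⟨t₁, t₂, ht₁mem.1, ht₁mem.2, ht₂mem.1, ht₁, ht₂, ?_⟩
    intro t ht htc
    have htne : t ≠ t₀ := by
      intro h; rw [h] at htc; exact absurd htc hcΦ.ne'
    rcases lt_or_gt_of_ne htne with h | h
    · left
      exact hmono.injOn ⟨ht.le, h.le⟩ ⟨ht₁mem.1.le, ht₁mem.2.le⟩ (by rw [htc, ht₁])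
    · right
      exact hanti.injOn (mem_Ici.mpr h.le) (mem_Ici.mpr ht₂mem.1.le) (by rw [htc, ht₂])
  · -- unique solution at the max value
    refine ⟨t₀, ⟨ht₀pos, rfl⟩, ?_⟩
    rintro y ⟨hy, hyΦ⟩
    by_contra hne
    exact absurd hyΦ (ne_of_lt (hmax y hy hne))
  · -- no solution above the max
    rintro c hc ⟨t, ht, htc⟩
    rcases eq_or_ne t t₀ with h | h
    · rw [h] at htc; exact absurd htc hc.ne
    · exact absurd htc (ne_of_lt ((hmax t ht h).trans hc))

theorem stmt_2 (a b A B G γ θ p : ℝ) (ha : 0 < a) (hb : 0 < b) (hA : 0 < A)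
    (hB : 0 < B) (hG : 0 < G) (hγ1 : 1 < γ) (hγ2 : γ < 2) (h2θ : 2 < 2 * θ)
    (hθp : 2 * θ < p) :
    let Φ : ℝ → ℝ := fun t => a * t ^ (2 - γ) * A + b * t ^ (2 * θ - γ) * B - t ^ (p - γ) * G
    ∃ tp : ℝ, 0 < tp ∧ (∀ t : ℝ, 0 < t → t ≠ tp → Φ t < Φ tp) ∧
      (∀ c : ℝ, 0 < c → c < Φ tp →
        ∃ t₁ t₂ : ℝ, 0 < t₁ ∧ t₁ < tp ∧ tp < t₂ ∧ Φ t₁ = c ∧ Φ t₂ = c ∧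
          ∀ t : ℝ, 0 < t → Φ t = c → t = t₁ ∨ t = t₂) ∧
      (∃! t : ℝ, 0 < t ∧ Φ t = Φ tp) ∧
      (∀ c : ℝ, Φ tp < c → ¬ ∃ t : ℝ, 0 < t ∧ Φ t = c) := by
  intro Φ
  exact stmt_2_aux a b A B G γ θ p ha hb hA hB hG hγ1 hγ2 h2θ hθp Φ rfl
end

section
/- Let a ≥ 0, b > 0, λ > 0, F > 0, and real numbers x ≥ 0, y > 0, G, with exponents 1 < γ < 2 < 2θ < p. Suppose the Nehari condition a·x + b·y − λF − G = 0 holds together with the second-order condition 2a·x + 2θb·y − γλF − pG > 0. Then a(1/2 − 1/p)x + b(1/(2θ) − 1/p)y − λ(1/γ − 1/p)F < a(p−2)((γ−2)/(2pγ))x + b(p−2θ)((γ−2θ)/(2pθγ))y < 0. -/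
/-!
Subtracting `p` times the Nehari identity from the second-order condition eliminates `G` and
leaves `a (p - 2) x + b (p - 2θ) y < (p - γ) λ F`. The energy differs from the middle expression
by exactly `(a (p - 2) x + b (p - 2θ) y - (p - γ) λ F) / (p γ)`, which is therefore negative;
the middle expression is negative because `γ < 2 < 2θ < p` makes both its coefficients negative.
-/

section
variable {a b l F x y G γ θ p : ℝ}

theorem sub_neg_of_nehari_of_second_order (hNehari : a * x + b * y - l * F - G = 0)
    (hSecond : 2 * a * x + 2 * θ * b * y - γ * l * F - p * G > 0) :
    a * (p - 2) * x + b * (p - 2 * θ) * y - (p - γ) * (l * F) < 0 := by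
  linear_combination hSecond + p * hNehari

theorem energy_eq_bound_add (hp : p ≠ 0) (hγ : γ ≠ 0) (hθ : θ ≠ 0) :
    a * (1 / 2 - 1 / p) * x + b * (1 / (2 * θ) - 1 / p) * y - l * (1 / γ - 1 / p) * F
      = a * (p - 2) * ((γ - 2) / (2 * p * γ)) * x
        + b * (p - 2 * θ) * ((γ - 2 * θ) / (2 * p * θ * γ)) * y
        + (a * (p - 2) * x + b * (p - 2 * θ) * y - (p - γ) * (l * F)) / (p * γ) := by
  field_simp
  ring

theorem energy_bound_neg (ha : 0 ≤ a) (hb : 0 < b) (hx : 0 ≤ x) (hy : 0 < y) (hγ0 : 0 < γ)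
    (hγ2 : γ < 2) (h2θ : 2 < 2 * θ) (hθp : 2 * θ < p) :
    a * (p - 2) * ((γ - 2) / (2 * p * γ)) * x
      + b * (p - 2 * θ) * ((γ - 2 * θ) / (2 * p * θ * γ)) * y < 0 := by
  have hθ : 0 < θ := by linarith
  have hp : 0 < p := by linarith
  have hax : a * (p - 2) * ((γ - 2) / (2 * p * γ)) * x ≤ 0 :=
    mul_nonpos_of_nonpos_of_nonneg
      (mul_nonpos_of_nonneg_of_nonpos (mul_nonneg ha (by linarith))
        (div_nonpos_of_nonpos_of_nonneg (by linarith) (by positivity))) hx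
  have hby : b * (p - 2 * θ) * ((γ - 2 * θ) / (2 * p * θ * γ)) * y < 0 :=
    mul_neg_of_neg_of_pos
      (mul_neg_of_pos_of_neg (mul_pos hb (by linarith))
        (div_neg_of_neg_of_pos (by linarith) (by positivity))) hy
  linarith

end

theorem stmt_6_general (a b l F x y G γ θ p : ℝ) (ha : 0 ≤ a) (hb : 0 < b)
    (hx : 0 ≤ x) (hy : 0 < y)
    (hγ1 : 1 < γ) (hγ2 : γ < 2) (h2θ : 2 < 2 * θ) (hθp : 2 * θ < p)
    (hNehari : a * x + b * y - l * F - G = 0)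
    (hSecond : 2 * a * x + 2 * θ * b * y - γ * l * F - p * G > 0) :
    a * (1 / 2 - 1 / p) * x + b * (1 / (2 * θ) - 1 / p) * y - l * (1 / γ - 1 / p) * F
      < a * (p - 2) * ((γ - 2) / (2 * p * γ)) * x
        + b * (p - 2 * θ) * ((γ - 2 * θ) / (2 * p * θ * γ)) * y ∧
    a * (p - 2) * ((γ - 2) / (2 * p * γ)) * x
      + b * (p - 2 * θ) * ((γ - 2 * θ) / (2 * p * θ * γ)) * y < 0 := by
  have hγ0 : 0 < γ := by linarith
  have hp : 0 < p := by linarith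
  have hgap := div_neg_of_neg_of_pos (sub_neg_of_nehari_of_second_order hNehari hSecond)
    (mul_pos hp hγ0)
  refine ⟨?_, energy_bound_neg ha hb hx hy hγ0 hγ2 h2θ hθp⟩
  rw [energy_eq_bound_add hp.ne' hγ0.ne' (by linarith)]
  linarith

theorem stmt_6 (a b l F x y G γ θ p : ℝ) (ha : 0 ≤ a) (hb : 0 < b) (hl : 0 < l)
    (hF : 0 < F) (hx : 0 ≤ x) (hy : 0 < y)
    (hγ1 : 1 < γ) (hγ2 : γ < 2) (h2θ : 2 < 2 * θ) (hθp : 2 * θ < p)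
    (hNehari : a * x + b * y - l * F - G = 0)
    (hSecond : 2 * a * x + 2 * θ * b * y - γ * l * F - p * G > 0) :
    a * (1 / 2 - 1 / p) * x + b * (1 / (2 * θ) - 1 / p) * y - l * (1 / γ - 1 / p) * F
      < a * (p - 2) * ((γ - 2) / (2 * p * γ)) * x
        + b * (p - 2 * θ) * ((γ - 2 * θ) / (2 * p * θ * γ)) * y ∧
    a * (p - 2) * ((γ - 2) / (2 * p * γ)) * x
      + b * (p - 2 * θ) * ((γ - 2 * θ) / (2 * p * θ * γ)) * y < 0 :=
  stmt_6_general a b l F x y G γ θ p ha hb hx hy hγ1 hγ2 h2θ hθp hNehari hSecond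
end

section
/- Let a > 0, b > 0 and 1 < γ < 2 < 2θ < p. Let A, B, F, G > 0 and λ > 0, and define ψ(t) = (a t²/2)A + (b t^(2θ)/(2θ))B − (λ t^γ/γ)F − (t^p/p)G. If t₀ > 0 satisfies ψ'(t₀) = 0 and ψ''(t₀) = 0 (so t₀ is a degenerate critical point), then necessarily λ·F equals the maximum value of Φ(t) = a t^(2−γ)A + b t^(2θ−γ)B − t^(p−γ)G over t > 0, and t₀ is the unique maximizer of Φ. -/
/-!
Dividing the fibering map's derivative by `t ^ (γ - 1)` leaves `Φ t - λ F`, where `Φ` is the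
critical level. So `ψ' (t₀) = 0` says `λ F = Φ t₀`, and then, by the product rule,
`ψ'' (t₀) = 0` says `Φ' (t₀) = 0`.
Moreover `Φ' (t) = t ^ (p - γ - 1) k (t)` with `k` a sum of two positive multiples of negative powers
of `t` minus a constant. Such a `k` is strictly decreasing, so `Φ'` changes sign exactly once, from
positive to negative, at its zero `t₀`. Hence `t₀` is the strict maximum of `Φ`.
-/

open Real Set Filter Topology

section Calculus

variable {𝕜 : Type*} [NontriviallyNormedField 𝕜]

theorem eq_and_deriv_eq_zero_of_deriv_eventuallyEq_mul {f w g : 𝕜 → 𝕜} {c x₀ : 𝕜}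
    (hf : deriv f =ᶠ[𝓝 x₀] fun x => w x * (g x - c)) (hw : DifferentiableAt 𝕜 w x₀)
    (hw₀ : w x₀ ≠ 0) (hg : DifferentiableAt 𝕜 g x₀) (h₁ : deriv f x₀ = 0)
    (h₂ : deriv (deriv f) x₀ = 0) : g x₀ = c ∧ deriv g x₀ = 0 := by
  have hgc : g x₀ = c := by
    rw [hf.eq_of_nhds] at h₁
    exact sub_eq_zero.mp ((mul_eq_zero.mp h₁).resolve_left hw₀)
  refine ⟨hgc, ?_⟩
  have hderiv := (hw.hasDerivAt.fun_mul (hg.hasDerivAt.sub_const c)).deriv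
  rw [hf.deriv_eq, hderiv, hgc, sub_self, mul_zero, zero_add] at h₂
  exact (mul_eq_zero.mp h₂).resolve_left hw₀

end Calculus

theorem apply_lt_of_hasDerivAt_mul_of_strictAntiOn {f w k : ℝ → ℝ} {c x₀ : ℝ}
    (hf : ∀ x ∈ Ioi c, HasDerivAt f (w x * k x) x) (hw : ∀ x ∈ Ioi c, 0 < w x)
    (hk : StrictAntiOn k (Ioi c)) (hx₀ : c < x₀) (hkx₀ : k x₀ = 0) :
    ∀ x ∈ Ioi c, x ≠ x₀ → f x < f x₀ := by
  have hcont (s : Set ℝ) (hs : s ⊆ Ioi c) : ContinuousOn f s := fun x hx =>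
    (hf x (hs hx)).continuousAt.continuousWithinAt
  have hderiv (s : Set ℝ) (hs : s ⊆ Ioi c) :
      ∀ x ∈ interior s, HasDerivWithinAt f (w x * k x) (interior s) x := fun x hx =>
    (hf x (hs (interior_subset hx))).hasDerivWithinAt
  have hmono : StrictMonoOn f (Ioc c x₀) := by
    refine strictMonoOn_of_hasDerivWithinAt_pos (convex_Ioc c x₀) (hcont _ Ioc_subset_Ioi_self)
      (hderiv _ Ioc_subset_Ioi_self) fun x hx => ?_
    rw [interior_Ioc] at hx
    exact mul_pos (hw x hx.1) (hkx₀ ▸ hk hx.1 hx₀ hx.2)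
  have hanti : StrictAntiOn f (Ici x₀) := by
    have hsub : Ici x₀ ⊆ Ioi c := Ici_subset_Ioi.mpr hx₀
    refine strictAntiOn_of_hasDerivWithinAt_neg (convex_Ici x₀) (hcont _ hsub) (hderiv _ hsub)
      fun x hx => ?_
    rw [interior_Ici] at hx
    have hxc := hsub (Ioi_subset_Ici_self hx)
    exact mul_neg_of_pos_of_neg (hw x hxc) (hkx₀ ▸ hk hx₀ hxc hx)
  intro x hx hne
  rcases hne.lt_or_gt with hlt | hgt
  · exact hmono ⟨hx, hlt.le⟩ ⟨hx₀, le_rfl⟩ hlt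
  · exact hanti self_mem_Ici (mem_Ici.mpr hgt.le) hgt

theorem strictAntiOn_mul_rpow_add_mul_rpow_sub {c₁ c₂ r₁ r₂ : ℝ} (hc₁ : 0 < c₁) (hc₂ : 0 < c₂)
    (hr₁ : r₁ < 0) (hr₂ : r₂ < 0) (d : ℝ) :
    StrictAntiOn (fun x : ℝ => c₁ * x ^ r₁ + c₂ * x ^ r₂ - d) (Ioi 0) := by
  intro x hx y _ hxy
  have h₁ := mul_lt_mul_of_pos_left (rpow_lt_rpow_of_neg hx hxy hr₁) hc₁
  have h₂ := mul_lt_mul_of_pos_left (rpow_lt_rpow_of_neg hx hxy hr₂) hc₂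
  dsimp only
  linarith

noncomputable def fiberingMap (a b A B F G γ θ p l t : ℝ) : ℝ :=
  a * t ^ (2 : ℝ) / 2 * A + b * t ^ (2 * θ) / (2 * θ) * B - l * t ^ γ / γ * F - t ^ p / p * G

noncomputable def criticalLevel (a b A B G γ θ p t : ℝ) : ℝ :=
  a * t ^ (2 - γ) * A + b * t ^ (2 * θ - γ) * B - t ^ (p - γ) * G

section Fibering

variable {a b A B F G γ θ p l t : ℝ}

theorem hasDerivAt_fiberingMap (hγ : γ ≠ 0) (hθ : θ ≠ 0) (hp : p ≠ 0) (ht : 0 < t) :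
    HasDerivAt (fiberingMap a b A B F G γ θ p l)
      (t ^ (γ - 1) * (criticalLevel a b A B G γ θ p t - l * F)) t := by
  have hpow (r : ℝ) := hasDerivAt_rpow_const (x := t) (p := r) (Or.inl ht.ne')
  have H := ((((hpow 2).const_mul a).div_const 2).mul_const A).add
    ((((hpow (2 * θ)).const_mul b).div_const (2 * θ)).mul_const B) |>.sub
    ((((hpow γ).const_mul l).div_const γ).mul_const F) |>.sub (((hpow p).div_const p).mul_const G)
  refine H.congr_deriv ?_
  have hsplit (r : ℝ) : t ^ (r - 1) = t ^ (γ - 1) * t ^ (r - γ) := by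
    rw [← rpow_add ht]
    ring_nf
  rw [hsplit 2, hsplit (2 * θ), hsplit p, criticalLevel]
  field_simp
  ring

theorem hasDerivAt_criticalLevel (ht : 0 < t) :
    HasDerivAt (criticalLevel a b A B G γ θ p)
      (t ^ (p - γ - 1) * (a * A * (2 - γ) * t ^ (2 - p) + b * B * (2 * θ - γ) * t ^ (2 * θ - p)
        - G * (p - γ))) t := by
  have hpow (r : ℝ) := hasDerivAt_rpow_const (x := t) (p := r) (Or.inl ht.ne')
  have H := (((hpow (2 - γ)).const_mul a).mul_const A).add
    (((hpow (2 * θ - γ)).const_mul b).mul_const B) |>.sub ((hpow (p - γ)).mul_const G)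
  refine H.congr_deriv ?_
  have hsplit (r : ℝ) : t ^ (r - γ - 1) = t ^ (p - γ - 1) * t ^ (r - p) := by
    rw [← rpow_add ht]
    ring_nf
  rw [hsplit 2, hsplit (2 * θ)]
  ring

theorem criticalLevel_lt_of_deriv_eq_zero (ha : 0 < a) (hb : 0 < b) (hA : 0 < A) (hB : 0 < B)
    (hγ : γ < 2) (h2θ : 2 < 2 * θ) (hθp : 2 * θ < p) {t₀ : ℝ} (ht₀ : 0 < t₀)
    (hcrit : deriv (criticalLevel a b A B G γ θ p) t₀ = 0) :
    ∀ t, 0 < t → t ≠ t₀ → criticalLevel a b A B G γ θ p t < criticalLevel a b A B G γ θ p t₀ := by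
  rw [(hasDerivAt_criticalLevel ht₀).deriv] at hcrit
  refine apply_lt_of_hasDerivAt_mul_of_strictAntiOn (fun x hx => hasDerivAt_criticalLevel hx)
    (fun x hx => rpow_pos_of_pos hx _) ?_ ht₀ ((mul_eq_zero.mp hcrit).resolve_left
      (rpow_pos_of_pos ht₀ _).ne')
  exact strictAntiOn_mul_rpow_add_mul_rpow_sub (mul_pos (mul_pos ha hA) (by linarith))
    (mul_pos (mul_pos hb hB) (by linarith)) (by linarith) (by linarith) _

end Fibering

theorem stmt_14_general (a b A B F G γ θ p l : ℝ) (ha : 0 < a) (hb : 0 < b)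
    (hγ1 : 1 < γ) (hγ2 : γ < 2) (h2θ : 2 < 2 * θ) (hθp : 2 * θ < p)
    (hA : 0 < A) (hB : 0 < B) :
    let ψ : ℝ → ℝ := fun t => a * t ^ (2 : ℝ) / 2 * A + b * t ^ (2 * θ) / (2 * θ) * B
      - l * t ^ γ / γ * F - t ^ p / p * G
    let Φ : ℝ → ℝ := fun t => a * t ^ (2 - γ) * A + b * t ^ (2 * θ - γ) * B - t ^ (p - γ) * G
    ∀ t₀ : ℝ, 0 < t₀ → deriv ψ t₀ = 0 → deriv (deriv ψ) t₀ = 0 →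
      l * F = Φ t₀ ∧ ∀ t : ℝ, 0 < t → t ≠ t₀ → Φ t < Φ t₀ := by
  intro ψ Φ t₀ ht₀ hd1 hd2
  have hψ' : deriv ψ =ᶠ[𝓝 t₀] fun t => t ^ (γ - 1) * (Φ t - l * F) :=
    eventually_of_mem (Ioi_mem_nhds ht₀) fun t ht =>
      (hasDerivAt_fiberingMap (by linarith) (by linarith) (by linarith) ht).deriv
  obtain ⟨hlevel, hcrit⟩ := eq_and_deriv_eq_zero_of_deriv_eventuallyEq_mul hψ'
    (hasDerivAt_rpow_const (Or.inl ht₀.ne')).differentiableAt (rpow_pos_of_pos ht₀ _).ne'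
    (hasDerivAt_criticalLevel ht₀).differentiableAt hd1 hd2
  exact ⟨hlevel.symm, criticalLevel_lt_of_deriv_eq_zero ha hb hA hB hγ2 h2θ hθp ht₀ hcrit⟩

theorem stmt_14 (a b A B F G γ θ p l : ℝ) (ha : 0 < a) (hb : 0 < b)
    (hγ1 : 1 < γ) (hγ2 : γ < 2) (h2θ : 2 < 2 * θ) (hθp : 2 * θ < p)
    (hA : 0 < A) (hB : 0 < B) (hF : 0 < F) (hG : 0 < G) (hl : 0 < l) :
    let ψ : ℝ → ℝ := fun t => a * t ^ (2 : ℝ) / 2 * A + b * t ^ (2 * θ) / (2 * θ) * B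
      - l * t ^ γ / γ * F - t ^ p / p * G
    let Φ : ℝ → ℝ := fun t => a * t ^ (2 - γ) * A + b * t ^ (2 * θ - γ) * B - t ^ (p - γ) * G
    ∀ t₀ : ℝ, 0 < t₀ → deriv ψ t₀ = 0 → deriv (deriv ψ) t₀ = 0 →
      l * F = Φ t₀ ∧ ∀ t : ℝ, 0 < t → t ≠ t₀ → Φ t < Φ t₀ :=
  stmt_14_general a b A B F G γ θ p l ha hb hγ1 hγ2 h2θ hθp hA hB
end

section
/- Let a ≥ 0, b > 0, 1 < γ < 2θ < p, θ > 1, and fix A, B, F, G ∈ ℝ with F > 0. For λ in an open interval I ⊂ (0,∞), suppose t⁻(λ) > 0 is a C¹ function satisfying the Nehari equation a t² A + b t^(2θ) B − λ t^γ F − t^p G = 0 at t = t⁻(λ) together with the strict second-order condition 2a t² A + 2θ b t^(2θ) B − γ λ t^γ F − p t^p G < 0 at t = t⁻(λ). Then λ ↦ t⁻(λ) is strictly decreasing on I, and λ ↦ ψ_λ(t⁻(λ)) is strictly decreasing on I, where ψ_λ(t) = (a t²/2)A + (b t^(2θ)/(2θ))B − (λ t^γ/γ)F − (t^p/p)G.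 -/
/-!
Write `ψ_λ(t) = ψ₀(t) - λ S(t)` with `S(t) = t^γ F / γ`, so that the Nehari function is
`Φ(λ, t) = t ∂ₜψ_λ(t) = P(t) - λ Q(t)` with `Q(t) = t^γ F`. Differentiating `Φ(λ, t⁻(λ)) = 0`
gives `(P' - λ Q')(t⁻) · t⁻' = Q(t⁻) > 0`, and the second-order condition says `P' - λ Q' < 0`
at `t⁻`, whence `t⁻' < 0`. Along `t⁻` the `t`-derivative of `ψ_λ` vanishes, so
`d/dλ ψ_λ(t⁻(λ)) = -S(t⁻(λ)) < 0` (envelope identity).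
-/

open Real Set Filter Topology

theorem strictAntiOn_of_hasDerivAt_neg {D : Set ℝ} (hD : Convex ℝ D)
    {f f' : ℝ → ℝ} (hf : ∀ x ∈ D, HasDerivAt f (f' x) x) (hf' : ∀ x ∈ D, f' x < 0) :
    StrictAntiOn f D :=
  strictAntiOn_of_hasDerivWithinAt_neg hD (fun x hx => (hf x hx).continuousAt.continuousWithinAt)
    (fun x hx => (hf x (interior_subset hx)).hasDerivWithinAt)
    (fun x hx => hf' x (interior_subset hx))

theorem Real.hasDerivAt_rpow_const_of_pos {t : ℝ} (r : ℝ) (ht : 0 < t) :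
    HasDerivAt (fun t => t ^ r) (r * t ^ r / t) t := by
  simpa only [rpow_sub_one ht.ne', mul_div_assoc] using
    hasDerivAt_rpow_const (p := r) (Or.inl ht.ne')

section AffineFamily

/-! Families `E(λ, t) = R(t) - λ S(t)`, affine in `λ`, evaluated along a curve `t = m(λ)`. -/

variable {R S m : ℝ → ℝ} {r s d l : ℝ}

theorem hasDerivAt_sub_mul_comp (hR : HasDerivAt R r (m l)) (hS : HasDerivAt S s (m l))
    (hm : HasDerivAt m d l) :
    HasDerivAt (fun x => R (m x) - x * S (m x)) ((r - l * s) * d - S (m l)) l := by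
  refine ((hR.comp l hm).sub ((hasDerivAt_id' l).mul (hS.comp l hm))).congr_deriv ?_
  simp only [Function.comp_apply]
  ring

theorem mul_deriv_eq_of_eventually_sub_mul_comp_eq_zero (hR : HasDerivAt R r (m l))
    (hS : HasDerivAt S s (m l)) (hm : HasDerivAt m d l)
    (hzero : (fun x => R (m x) - x * S (m x)) =ᶠ[𝓝 l] 0) :
    (r - l * s) * d = S (m l) :=
  sub_eq_zero.mp <| (hasDerivAt_sub_mul_comp hR hS hm).unique <|
    (hasDerivAt_const l (0 : ℝ)).congr_of_eventuallyEq hzero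

theorem deriv_neg_of_eventually_sub_mul_comp_eq_zero (hR : HasDerivAt R r (m l))
    (hS : HasDerivAt S s (m l)) (hm : HasDerivAt m d l)
    (hzero : (fun x => R (m x) - x * S (m x)) =ᶠ[𝓝 l] 0)
    (hsecond : r - l * s < 0) (hSpos : 0 < S (m l)) : d < 0 := by
  have h := mul_deriv_eq_of_eventually_sub_mul_comp_eq_zero hR hS hm hzero
  nlinarith

theorem hasDerivAt_sub_mul_comp_of_critical (hR : HasDerivAt R r (m l))
    (hS : HasDerivAt S s (m l)) (hm : HasDerivAt m d l) (hcrit : r - l * s = 0) :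
    HasDerivAt (fun x => R (m x) - x * S (m x)) (-S (m l)) l := by
  simpa [hcrit] using hasDerivAt_sub_mul_comp hR hS hm

end AffineFamily

section Fibering

variable (a b A B G θ p : ℝ)

/-- The fibering map `ψ_λ` at `λ = 0`. -/
noncomputable def psi₀ (t : ℝ) : ℝ :=
  a * t ^ (2 : ℝ) / 2 * A + b * t ^ (2 * θ) / (2 * θ) * B - t ^ p / p * G

/-- `t ψ₀'(t)`, the `λ`-independent part of the Nehari function. -/
noncomputable def nehari₀ (t : ℝ) : ℝ :=
  a * t ^ (2 : ℝ) * A + b * t ^ (2 * θ) * B - t ^ p * G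

theorem hasDerivAt_psi₀ {t : ℝ} (ht : 0 < t) (hθ : θ ≠ 0) (hp : p ≠ 0) :
    HasDerivAt (psi₀ a b A B G θ p) (nehari₀ a b A B G θ p t / t) t := by
  have h := (((((hasDerivAt_rpow_const_of_pos 2 ht).const_mul a).div_const 2).mul_const A).add
    ((((hasDerivAt_rpow_const_of_pos (2 * θ) ht).const_mul b).div_const (2 * θ)).mul_const B)).sub
    (((hasDerivAt_rpow_const_of_pos p ht).div_const p).mul_const G)
  refine h.congr_deriv ?_
  simp only [nehari₀]
  field_simp

theorem hasDerivAt_nehari₀ {t : ℝ} (ht : 0 < t) :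
    HasDerivAt (nehari₀ a b A B G θ p)
      ((2 * a * t ^ (2 : ℝ) * A + 2 * θ * b * t ^ (2 * θ) * B - p * t ^ p * G) / t) t := by
  have h := ((((hasDerivAt_rpow_const_of_pos 2 ht).const_mul a).mul_const A).add
    (((hasDerivAt_rpow_const_of_pos (2 * θ) ht).const_mul b).mul_const B)).sub
    ((hasDerivAt_rpow_const_of_pos p ht).mul_const G)
  refine h.congr_deriv ?_
  ring

variable {a b A B G θ p} {F γ : ℝ} {m : ℝ → ℝ} {d l : ℝ}

theorem HasDerivAt.neg_of_nehari (hm : HasDerivAt m d l) (ht : 0 < m l) (hF : 0 < F)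
    (hzero : (fun x => nehari₀ a b A B G θ p (m x) - x * (m x ^ γ * F)) =ᶠ[𝓝 l] 0)
    (hsecond : 2 * a * m l ^ (2 : ℝ) * A + 2 * θ * b * m l ^ (2 * θ) * B
      - γ * l * m l ^ γ * F - p * m l ^ p * G < 0) :
    d < 0 := by
  refine deriv_neg_of_eventually_sub_mul_comp_eq_zero (hasDerivAt_nehari₀ a b A B G θ p ht)
    ((hasDerivAt_rpow_const_of_pos γ ht).mul_const F) hm hzero ?_ (by positivity)
  calc _ = (2 * a * m l ^ (2 : ℝ) * A + 2 * θ * b * m l ^ (2 * θ) * B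
          - γ * l * m l ^ γ * F - p * m l ^ p * G) / m l := by ring
    _ < 0 := div_neg_of_neg_of_pos hsecond ht

theorem HasDerivAt.psi_comp_of_nehari (hm : HasDerivAt m d l) (ht : 0 < m l)
    (hγ : γ ≠ 0) (hθ : θ ≠ 0) (hp : p ≠ 0)
    (hzero : nehari₀ a b A B G θ p (m l) - l * (m l ^ γ * F) = 0) :
    HasDerivAt (fun x => psi₀ a b A B G θ p (m x) - x * (m x ^ γ / γ * F))
      (-(m l ^ γ / γ * F)) l := by
  refine hasDerivAt_sub_mul_comp_of_critical (hasDerivAt_psi₀ a b A B G θ p ht hθ hp)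
    (((hasDerivAt_rpow_const_of_pos γ ht).div_const γ).mul_const F) hm ?_
  calc _ = (nehari₀ a b A B G θ p (m l) - l * (m l ^ γ * F)) / m l := by field_simp
    _ = 0 := by rw [hzero, zero_div]

end Fibering

theorem stmt_15_general (a b A B F G γ θ p lo hi : ℝ) (hF : 0 < F)
    (hγ1 : 1 < γ) (hθp : 2 * θ < p) (hθ : 1 < θ)
    (tm : ℝ → ℝ) (htmC1 : ContDiffOn ℝ 1 tm (Set.Ioo lo hi))
    (htmpos : ∀ l ∈ Set.Ioo lo hi, 0 < tm l)
    (hNehari : ∀ l ∈ Set.Ioo lo hi,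
      a * (tm l) ^ (2 : ℝ) * A + b * (tm l) ^ (2 * θ) * B
        - l * (tm l) ^ γ * F - (tm l) ^ p * G = 0)
    (hSecond : ∀ l ∈ Set.Ioo lo hi,
      2 * a * (tm l) ^ (2 : ℝ) * A + 2 * θ * b * (tm l) ^ (2 * θ) * B
        - γ * l * (tm l) ^ γ * F - p * (tm l) ^ p * G < 0) :
    StrictAntiOn tm (Set.Ioo lo hi) ∧
    StrictAntiOn (fun l => a * (tm l) ^ (2 : ℝ) / 2 * A + b * (tm l) ^ (2 * θ) / (2 * θ) * B
      - l * (tm l) ^ γ / γ * F - (tm l) ^ p / p * G) (Set.Ioo lo hi) := by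
  obtain ⟨hγ, hθ0, hp⟩ : 0 < γ ∧ 0 < θ ∧ 0 < p := ⟨by linarith, by linarith, by linarith⟩
  have htm : ∀ l ∈ Ioo lo hi, HasDerivAt tm (deriv tm l) l := fun l hl =>
    ((htmC1.differentiableOn one_ne_zero).differentiableAt (isOpen_Ioo.mem_nhds hl)).hasDerivAt
  have hΦ : ∀ l ∈ Ioo lo hi, nehari₀ a b A B G θ p (tm l) - l * (tm l ^ γ * F) = 0 := by
    intro l hl
    simp only [nehari₀]
    linear_combination hNehari l hl
  have hψ : (fun l => a * (tm l) ^ (2 : ℝ) / 2 * A + b * (tm l) ^ (2 * θ) / (2 * θ) * B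
      - l * (tm l) ^ γ / γ * F - (tm l) ^ p / p * G)
      = fun l => psi₀ a b A B G θ p (tm l) - l * (tm l ^ γ / γ * F) := by
    funext l
    simp only [psi₀]
    ring
  refine ⟨strictAntiOn_of_hasDerivAt_neg (convex_Ioo lo hi) htm fun l hl =>
    (htm l hl).neg_of_nehari (htmpos l hl) hF
      (eventually_of_mem (isOpen_Ioo.mem_nhds hl) hΦ) (hSecond l hl), ?_⟩
  rw [hψ]
  refine strictAntiOn_of_hasDerivAt_neg (convex_Ioo lo hi) (fun l hl =>
    (htm l hl).psi_comp_of_nehari (htmpos l hl) hγ.ne' hθ0.ne' hp.ne' (hΦ l hl))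
    fun l hl => ?_
  have := htmpos l hl
  exact neg_neg_of_pos (by positivity)

theorem stmt_15 (a b A B F G γ θ p lo hi : ℝ) (ha : 0 ≤ a) (hb : 0 < b) (hF : 0 < F)
    (hγ1 : 1 < γ) (hγθ : γ < 2 * θ) (hθp : 2 * θ < p) (hθ : 1 < θ)
    (hI : Set.Ioo lo hi ⊆ Set.Ioi (0 : ℝ))
    (tm : ℝ → ℝ) (htmC1 : ContDiffOn ℝ 1 tm (Set.Ioo lo hi))
    (htmpos : ∀ l ∈ Set.Ioo lo hi, 0 < tm l)
    (hNehari : ∀ l ∈ Set.Ioo lo hi,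
      a * (tm l) ^ (2 : ℝ) * A + b * (tm l) ^ (2 * θ) * B
        - l * (tm l) ^ γ * F - (tm l) ^ p * G = 0)
    (hSecond : ∀ l ∈ Set.Ioo lo hi,
      2 * a * (tm l) ^ (2 : ℝ) * A + 2 * θ * b * (tm l) ^ (2 * θ) * B
        - γ * l * (tm l) ^ γ * F - p * (tm l) ^ p * G < 0) :
    StrictAntiOn tm (Set.Ioo lo hi) ∧
    StrictAntiOn (fun l => a * (tm l) ^ (2 : ℝ) / 2 * A + b * (tm l) ^ (2 * θ) / (2 * θ) * B
      - l * (tm l) ^ γ / γ * F - (tm l) ^ p / p * G) (Set.Ioo lo hi) :=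
  stmt_15_general a b A B F G γ θ p lo hi hF hγ1 hθp hθ tm htmC1 htmpos hNehari hSecond
end
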